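/- arXiv:2507.08293 — 4 statements merged into one kernel-verified Lean document; each statement's English description precedes it below -/
import Mathlib

section
/- For every integer k, the parallelogram in the delay–Doppler plane ℝ² spanned by the vectors u = (Δt, 2·c̃₁·Δt) and v_k = (T_SC + k·Δt, 2·c̃₁·k·Δt) has area exactly 1; that is, |det M| = 1 where M is the 2×2 matrix with columns u and v_k. (This is the statement that every unambiguity parallelogram formed by four adjacent pulses of the AAF of an AFDM chirp subcarrier has unit area.) -/
open Complex Real

noncomputable section

namespace AFDM

variable (N C : ℕ) (Δt : ℝ)

/-- Frame duration `T = N·Δt`. -/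
def T : ℝ := N * Δt

/-- Chirp rate parameter `c̃₁ = C/(2·T·Δt)`. -/
def ctil : ℝ := C / (2 * T N Δt * Δt)

/-- Subchirp duration `T_SC = T/C`. -/
def TSC : ℝ := T N Δt / C

/-- Adding `k • u` to the second column does not change the determinant, so only the
shift `b` of `v` off the line through `u = (a, c a)` contributes. -/
theorem det_fin_two_shear {R : Type*} [CommRing R] (a b c k : R) :
    !![a, b + k * a; c * a, c * (k * a)].det = -(c * a * b) := by
  rw [Matrix.det_fin_two_of]
  ring

theorem two_mul_ctil_mul_mul_TSC {N C : ℕ} {Δt : ℝ} (hN : N ≠ 0) (hC : C ≠ 0) (hΔt : Δt ≠ 0) :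
    2 * ctil N C Δt * Δt * TSC N C Δt = 1 := by
  have hT : T N Δt ≠ 0 := mul_ne_zero (Nat.cast_ne_zero.mpr hN) hΔt
  have hC' : (C : ℝ) ≠ 0 := Nat.cast_ne_zero.mpr hC
  rw [ctil, TSC]
  field_simp

theorem unambiguity_parallelogram_area_general
    (N C : ℕ) (hN : 0 < N) (hC : 0 < C)
    (Δt : ℝ) (hΔt : 0 < Δt) (k : ℤ) :
    |Matrix.det !![Δt, TSC N C Δt + (k : ℝ) * Δt;
                   2 * ctil N C Δt * Δt, 2 * ctil N C Δt * ((k : ℝ) * Δt)]| = 1 := by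
  rw [det_fin_two_shear, two_mul_ctil_mul_mul_TSC hN.ne' hC.ne' hΔt.ne', abs_neg, abs_one]

/-- Every unambiguity parallelogram formed by four adjacent pulses of the AAF of an AFDM
chirp subcarrier has unit area: for every integer `k`, the parallelogram spanned by
`u = (Δt, 2·c̃₁·Δt)` and `v_k = (T_SC + k·Δt, 2·c̃₁·k·Δt)` has `|det M| = 1`. -/
theorem unambiguity_parallelogram_area
    (N C : ℕ) (hN : 0 < N) (hNeven : Even N) (hC : 0 < C)
    (Δt : ℝ) (hΔt : 0 < Δt) (k : ℤ) :
    |Matrix.det !![Δt, TSC N C Δt + (k : ℝ) * Δt;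
                   2 * ctil N C Δt * Δt, 2 * ctil N C Δt * ((k : ℝ) * Δt)]| = 1 :=
  unambiguity_parallelogram_area_general N C hN hC Δt hΔt k

end AFDM
end
end

section
/- For every m ∈ {0,…,N−1} and every n ∈ {0,…,N−1}, the continuous-time AFDM chirp subcarrier satisfies φ_m(n·Δt) = exp(2πi(c₂·m² + c₁·n² + m·n/N)), where c₁ = C/(2N); that is, sampling φ_m(t) at the Nyquist interval Δt recovers the discrete-time chirp subcarrier φ_m[n]. -/
open MeasureTheory Complex Real

noncomputable section

namespace AFDM

variable (N C : ℕ) (Δt : ℝ)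

/-- Spectrum wrapping points `t_{m,q}`: `t_{m,0} = 0`, `t_{m,q} = q·T/C − m·Δt/C` for
`q = 1,…,C`, and `t_{m,C+1} = T`. -/
def tp (m q : ℕ) : ℝ :=
  if q = 0 then 0 else if q ≤ C then q * T N Δt / C - m * Δt / C else T N Δt

/-- Wrapping index function `q_m(t)`: equals `q` on `[t_{m,q}, t_{m,q+1})` for `t ∈ [0,T)`. -/
def qm (m : ℕ) (t : ℝ) : ℤ :=
  (((Finset.range (C + 1)).filter (fun q => tp N C Δt m q ≤ t)).card : ℤ) - 1

/-- The `m`-th continuous-time AFDM chirp subcarrier with parameter `c₂`: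
`φ_m(t) = exp(2πi(c₂·m² + c̃₁·t² + (m/T)·t − q_m(t)·t/Δt))` on `[0,T)`, `0` otherwise. -/
def phi (c₂ : ℝ) (m : ℕ) (t : ℝ) : ℂ :=
  if 0 ≤ t ∧ t < T N Δt then
    Complex.exp (2 * Real.pi * Complex.I *
      ((c₂ * (m : ℝ) ^ 2 + ctil N C Δt * t ^ 2 + ((m : ℝ) / T N Δt) * t
        - (qm N C Δt m t : ℝ) * t / Δt : ℝ) : ℂ))
  else 0

/-- The aperiodic ambiguity function `A_{a,b}(τ,ν) = ∫ a(t)·conj(b(t−τ))·exp(−2πiνt) dt`. -/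
def AF (a b : ℝ → ℂ) (τ ν : ℝ) : ℂ :=
  ∫ t : ℝ, a t * (starRingEnd ℂ) (b (t - τ)) *
    Complex.exp (-(2 * Real.pi * Complex.I * ((ν * t : ℝ) : ℂ)))

/-- The integral indicator `I(c, t₁, t₂)`. -/
def Iind (c t₁ t₂ : ℝ) : ℂ :=
  if c ≠ 0 then
    (Complex.exp (2 * Real.pi * Complex.I * ((c * t₂ : ℝ) : ℂ))
      - Complex.exp (2 * Real.pi * Complex.I * ((c * t₁ : ℝ) : ℂ))) /
      (2 * Real.pi * Complex.I * ((c : ℝ) : ℂ))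
  else ((t₂ - t₁ : ℝ) : ℂ)

/- At the sampling instants `t = n·Δt` the wrapping term `q_m(t)·t/Δt` of the phase is the integer
`q_m(t)·n`, so it disappears under `exp (2πi ·)` whatever the wrapping index is; the remaining chirp
terms reduce to the discrete ones since `c̃₁·(nΔt)² = C n²/(2N)` and `(m/T)·nΔt = mn/N`. -/

lemma exp_two_pi_I_mul_sub_intCast (x : ℝ) (k : ℤ) :
    Complex.exp (2 * π * I * ((x - k : ℝ) : ℂ)) = Complex.exp (2 * π * I * (x : ℂ)) := by
  have hk : Complex.exp (2 * π * I * (k : ℂ)) = 1 := by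
    rw [← Complex.exp_int_mul_two_pi_mul_I k]
    ring_nf
  push_cast
  rw [mul_sub, Complex.exp_sub, hk, div_one]

lemma natCast_mul_nonneg_and_lt_T {N n : ℕ} {Δt : ℝ} (hΔt : 0 < Δt) (hn : n < N) :
    0 ≤ (n : ℝ) * Δt ∧ (n : ℝ) * Δt < T N Δt :=
  ⟨by positivity, mul_lt_mul_of_pos_right (by exact_mod_cast hn) hΔt⟩

lemma phase_at_sample {N : ℕ} (C : ℕ) {Δt : ℝ} (hN : (N : ℝ) ≠ 0) (hΔt : Δt ≠ 0)
    (c₂ : ℝ) (m n : ℕ) (q : ℤ) :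
    c₂ * (m : ℝ) ^ 2 + ctil N C Δt * ((n : ℝ) * Δt) ^ 2 + ((m : ℝ) / T N Δt) * ((n : ℝ) * Δt)
        - (q : ℝ) * ((n : ℝ) * Δt) / Δt
      = c₂ * (m : ℝ) ^ 2 + ((C : ℝ) / (2 * (N : ℝ))) * (n : ℝ) ^ 2 + (m : ℝ) * (n : ℝ) / (N : ℝ)
        - ((q * n : ℤ) : ℝ) := by
  unfold ctil T
  push_cast
  field_simp

theorem sampling_recovers_discrete_chirp_general
    (N C : ℕ) (Δt : ℝ) (hΔt : 0 < Δt) (c₂ : ℝ) (m n : ℕ) (hn : n < N) :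
    phi N C Δt c₂ m ((n : ℝ) * Δt) =
      Complex.exp (2 * Real.pi * Complex.I *
        ((c₂ * (m : ℝ) ^ 2 + ((C : ℝ) / (2 * (N : ℝ))) * (n : ℝ) ^ 2
          + (m : ℝ) * (n : ℝ) / (N : ℝ) : ℝ) : ℂ)) := by
  have hN : (N : ℝ) ≠ 0 := by exact_mod_cast (n.zero_le.trans_lt hn).ne'
  rw [phi, if_pos (natCast_mul_nonneg_and_lt_T hΔt hn), phase_at_sample C hN hΔt.ne',
    exp_two_pi_I_mul_sub_intCast]

/-- Sampling the continuous-time AFDM chirp subcarrier at the Nyquist interval `Δt`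
recovers the discrete-time chirp subcarrier: for `m, n ∈ {0,…,N−1}`,
`φ_m(n·Δt) = exp(2πi(c₂·m² + c₁·n² + m·n/N))`, where `c₁ = C/(2N)`. -/
theorem sampling_recovers_discrete_chirp
    (N C : ℕ) (hN : 0 < N) (hNeven : Even N) (hC : 0 < C)
    (Δt : ℝ) (hΔt : 0 < Δt) (c₂ : ℝ) (m n : ℕ) (hm : m < N) (hn : n < N) :
    phi N C Δt c₂ m ((n : ℝ) * Δt) =
      Complex.exp (2 * Real.pi * Complex.I *
        ((c₂ * (m : ℝ) ^ 2 + ((C : ℝ) / (2 * (N : ℝ))) * (n : ℝ) ^ 2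
          + (m : ℝ) * (n : ℝ) / (N : ℝ) : ℝ) : ℂ)) :=
  sampling_recovers_discrete_chirp_general N C Δt hΔt c₂ m n hn

end AFDM
end
end

section
/- For every m ∈ {0,…,N−1} and every t ∈ [0,T), the instantaneous frequency of the m-th AFDM chirp subcarrier satisfies 0 ≤ 2·c̃₁·t + m/T − q_m(t)/Δt < 1/Δt; that is, the instantaneous frequencies of all chirp subcarriers are confined within the band [0, B) with B = 1/Δt. -/
/-! With `x = (C·t + m·Δt)/T`, the unwrapped frequency `2·c̃₁·t + m/T` equals `x/Δt`, and
`t_{m,q} ≤ t ↔ q ≤ x` for `1 ≤ q ≤ C`. Since `0 ≤ x < C + 1`, this gives `q_m(t) = ⌊x⌋`, so the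
instantaneous frequency is `fract x / Δt ∈ [0, 1/Δt)`. -/

open MeasureTheory Complex Real

noncomputable section

namespace AFDM

variable (N C : ℕ) (Δt : ℝ)

theorem _root_.Finset.filter_natCast_le_range_eq_range_floor {α : Type*} [Semiring α]
    [LinearOrder α] [IsStrictOrderedRing α] [FloorSemiring α] {x : α} (hx0 : 0 ≤ x) (n : ℕ)
    (hxn : x < n + 1) :
    (Finset.range (n + 1)).filter (fun q : ℕ => (q : α) ≤ x) = Finset.range (⌊x⌋₊ + 1) := by
  have hfloor : ⌊x⌋₊ < n + 1 := (Nat.floor_lt hx0).2 (by exact_mod_cast hxn)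
  ext q
  simp only [Finset.mem_filter, Finset.mem_range, ← Nat.le_floor_iff hx0]
  omega

/-- The unwrapped instantaneous frequency `2·c̃₁·t + m/T` in units of the bandwidth `1/Δt`. -/
def normFreq (m : ℕ) (t : ℝ) : ℝ := (C * t + m * Δt) / T N Δt

variable {N C Δt}

theorem two_mul_ctil_mul_add_div_T (hT : T N Δt ≠ 0) (m : ℕ) (t : ℝ) :
    2 * ctil N C Δt * t + (m : ℝ) / T N Δt = normFreq N C Δt m t / Δt := by
  have hΔt : Δt ≠ 0 := right_ne_zero_of_mul hT
  simp only [ctil, normFreq]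
  field_simp

theorem normFreq_nonneg (hT : 0 < T N Δt) (m : ℕ) {t : ℝ} (ht0 : 0 ≤ t) :
    0 ≤ normFreq N C Δt m t := by
  have hΔt : 0 < Δt := pos_of_mul_pos_right hT (Nat.cast_nonneg N)
  unfold normFreq
  positivity

theorem normFreq_lt (hΔt : 0 < Δt) {m : ℕ} (hm : m < N) {t : ℝ} (htT : t < T N Δt) :
    normFreq N C Δt m t < C + 1 := by
  have hmΔt : (m : ℝ) * Δt < T N Δt :=
    mul_lt_mul_of_pos_right (by exact_mod_cast hm) hΔt
  have hT : 0 < T N Δt := (by positivity : (0 : ℝ) ≤ m * Δt).trans_lt hmΔt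
  rw [normFreq, div_lt_iff₀ hT]
  linarith [mul_le_mul_of_nonneg_left htT.le (Nat.cast_nonneg (α := ℝ) C)]

theorem tp_le_iff_le_normFreq (hT : 0 < T N Δt) (m : ℕ) {t : ℝ} (ht0 : 0 ≤ t) {q : ℕ}
    (hqC : q ≤ C) : tp N C Δt m q ≤ t ↔ (q : ℝ) ≤ normFreq N C Δt m t := by
  rcases Nat.eq_zero_or_pos q with rfl | hq
  · simpa [tp, ht0] using normFreq_nonneg hT m ht0
  have hC : (0 : ℝ) < C := by exact_mod_cast hq.trans_le hqC
  rw [tp, if_neg hq.ne', if_pos hqC, normFreq, le_div_iff₀ hT, ← sub_div, div_le_iff₀ hC]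
  constructor <;> intro h <;> linarith

theorem qm_eq_floor_normFreq (hΔt : 0 < Δt) {m : ℕ} (hm : m < N) {t : ℝ} (ht0 : 0 ≤ t)
    (htT : t < T N Δt) : qm N C Δt m t = ⌊normFreq N C Δt m t⌋ := by
  have hT : 0 < T N Δt := ht0.trans_lt htT
  have hx0 := normFreq_nonneg (C := C) hT m ht0
  have hpassed : (Finset.range (C + 1)).filter (fun q => tp N C Δt m q ≤ t)
      = (Finset.range (C + 1)).filter (fun q : ℕ => (q : ℝ) ≤ normFreq N C Δt m t) :=
    Finset.filter_congr fun q hq =>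
      tp_le_iff_le_normFreq hT m ht0 (Nat.lt_succ_iff.1 (Finset.mem_range.1 hq))
  rw [qm, hpassed, Finset.filter_natCast_le_range_eq_range_floor hx0 C (normFreq_lt hΔt hm htT),
    Finset.card_range, ← Int.natCast_floor_eq_floor hx0]
  push_cast
  ring

theorem instantaneous_frequency_in_band_general
    (N C : ℕ)
    (Δt : ℝ) (hΔt : 0 < Δt) (m : ℕ) (hm : m < N) (t : ℝ)
    (ht0 : 0 ≤ t) (htT : t < T N Δt) :
    0 ≤ 2 * ctil N C Δt * t + (m : ℝ) / T N Δt - (qm N C Δt m t : ℝ) / Δt ∧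
      2 * ctil N C Δt * t + (m : ℝ) / T N Δt - (qm N C Δt m t : ℝ) / Δt < 1 / Δt := by
  have hfreq : 2 * ctil N C Δt * t + (m : ℝ) / T N Δt - (qm N C Δt m t : ℝ) / Δt
      = Int.fract (normFreq N C Δt m t) / Δt := by
    rw [two_mul_ctil_mul_add_div_T (ht0.trans_lt htT).ne', qm_eq_floor_normFreq hΔt hm ht0 htT,
      Int.fract, sub_div]
  rw [hfreq]
  exact ⟨div_nonneg (Int.fract_nonneg _) hΔt.le,
    div_lt_div_of_pos_right (Int.fract_lt_one _) hΔt⟩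

/-- The instantaneous frequency `2·c̃₁·t + m/T − q_m(t)/Δt` of every AFDM chirp subcarrier
is confined within the band `[0, B)` with `B = 1/Δt`. -/
theorem instantaneous_frequency_in_band
    (N C : ℕ) (hN : 0 < N) (hNeven : Even N) (hC : 0 < C)
    (Δt : ℝ) (hΔt : 0 < Δt) (m : ℕ) (hm : m < N) (t : ℝ)
    (ht0 : 0 ≤ t) (htT : t < T N Δt) :
    0 ≤ 2 * ctil N C Δt * t + (m : ℝ) / T N Δt - (qm N C Δt m t : ℝ) / Δt ∧
      2 * ctil N C Δt * t + (m : ℝ) / T N Δt - (qm N C Δt m t : ℝ) / Δt < 1 / Δt :=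
  instantaneous_frequency_in_band_general N C Δt hΔt m hm t ht0 htT

end AFDM
end
end

section
/- Let m ∈ {0,…,N−1}, k ∈ {0,…,C−1}, and let τ satisfy k·T_SC ≤ τ < k·T_SC + min{T_SC − t_{m,1}, t_{m,1}}. Then: (i) for every i ∈ {0,…,C−k−1} and every t ∈ [t_{m,i} + τ, t_{m,i+k+1}), q_m(t) − q_m(t−τ) = k; (ii) for every i ∈ {0,…,C−k−1} and every t ∈ [t_{m,i+k+1}, t_{m,i+1} + τ), q_m(t) − q_m(t−τ) = k + 1; (iii) for every t ∈ [t_{m,C−k} + τ, T), q_m(t) − q_m(t−τ) = k. (This is the frequency-alignment step lemma: the wrapping-index difference takes exactly the two values k and k+1, on the frequency-aligned and frequency-misaligned sub-intervals respectively.) -/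
/-!
Write `e = mΔt/C`, so that `t_{m,q} = q·T_SC − e` for `1 ≤ q ≤ C`: the gaps between consecutive
wrapping points are `T_SC − e`, then `T_SC`, …, `T_SC`, then `e`. With `τ = k·T_SC + δ` the window
hypothesis reads `0 ≤ δ < min(e, T_SC − e)`, since `T_SC − t_{m,1} = e`. Then the shifted interval
`[t_{m,i} + τ, t_{m,i+1} + τ)`, on which `q_m(t − τ) = i`, lies inside `[t_{m,i+k}, t_{m,i+k+2})`
(by `δ < e`) and contains `t_{m,i+k+1}` (by `δ < T_SC − e`); so `q_m(t)` is `i + k` before that point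
and `i + k + 1` after it. Part (iii) is the case `i = C − k` of part (i), as `t_{m,C+1} = T`.
-/

open MeasureTheory Complex Real

noncomputable section

namespace AFDM

variable (N C : ℕ) (Δt : ℝ)

section WrappingPoints

variable {N C Δt} {m : ℕ}

theorem T_eq_natCast_mul_TSC (hC : C ≠ 0) : T N Δt = C * TSC N C Δt := by
  unfold TSC
  field_simp

theorem tp_zero : tp N C Δt m 0 = 0 := by
  simp [tp]

theorem tp_of_ne_zero_of_le {q : ℕ} (hq : q ≠ 0) (hqC : q ≤ C) :
    tp N C Δt m q = q * TSC N C Δt - m * Δt / C := by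
  simp only [tp, if_neg hq, if_pos hqC, TSC]
  ring

theorem tp_one (hC : C ≠ 0) : tp N C Δt m 1 = TSC N C Δt - m * Δt / C := by
  simpa using tp_of_ne_zero_of_le (N := N) (Δt := Δt) (m := m) one_ne_zero
    (Nat.one_le_iff_ne_zero.mpr hC)

theorem tp_of_lt {q : ℕ} (hq : C < q) : tp N C Δt m q = T N Δt := by
  simp only [tp, if_neg (by omega : q ≠ 0), if_neg (not_le.mpr hq)]

theorem tp_le_tp_succ_and_tp_succ_le (hC : C ≠ 0) (he : 0 ≤ (m : ℝ) * Δt / C)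
    (heS : (m : ℝ) * Δt / C ≤ TSC N C Δt) (q : ℕ) :
    tp N C Δt m q ≤ tp N C Δt m (q + 1) ∧
      tp N C Δt m (q + 1) ≤ tp N C Δt m q + TSC N C Δt := by
  rcases Nat.lt_trichotomy q C with hq | rfl | hq
  · rw [tp_of_ne_zero_of_le (q := q + 1) q.succ_ne_zero hq]
    rcases eq_or_ne q 0 with rfl | hq0
    · rw [tp_zero]
      push_cast
      constructor <;> linarith
    · rw [tp_of_ne_zero_of_le hq0 hq.le]
      push_cast
      constructor <;> linarith
  · rw [tp_of_ne_zero_of_le hC le_rfl, tp_of_lt q.lt_succ_self, T_eq_natCast_mul_TSC hC]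
    constructor <;> linarith
  · rw [tp_of_lt hq, tp_of_lt (hq.trans q.lt_succ_self)]
    constructor <;> linarith

theorem tp_monotone (hC : C ≠ 0) (he : 0 ≤ (m : ℝ) * Δt / C)
    (heS : (m : ℝ) * Δt / C ≤ TSC N C Δt) : Monotone (tp N C Δt m) :=
  monotone_nat_of_le_succ fun q => (tp_le_tp_succ_and_tp_succ_le hC he heS q).1

theorem tp_le_tp_add_mul (hC : C ≠ 0) (he : 0 ≤ (m : ℝ) * Δt / C)
    (heS : (m : ℝ) * Δt / C ≤ TSC N C Δt) {i j : ℕ} (hij : i ≤ j) :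
    tp N C Δt m j ≤ tp N C Δt m i + (j - i) * TSC N C Δt := by
  induction j, hij using Nat.le_induction with
  | base => simp
  | succ j _ ih =>
    have := (tp_le_tp_succ_and_tp_succ_le hC he heS j).2
    push_cast
    linarith

theorem tp_le_natCast_mul (hC : C ≠ 0) (he : 0 ≤ (m : ℝ) * Δt / C)
    (heS : (m : ℝ) * Δt / C ≤ TSC N C Δt) (q : ℕ) :
    tp N C Δt m q ≤ q * TSC N C Δt := by
  simpa [tp_zero] using tp_le_tp_add_mul hC he heS (Nat.zero_le q)

theorem natCast_sub_one_mul_le_tp (hC : C ≠ 0) (he : 0 ≤ (m : ℝ) * Δt / C)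
    (heS : (m : ℝ) * Δt / C ≤ TSC N C Δt)
    {q : ℕ} (hq : q ≤ C + 1) :
    ((q : ℝ) - 1) * TSC N C Δt ≤ tp N C Δt m q := by
  rcases eq_or_ne q 0 with rfl | hq0
  · rw [tp_zero]
    push_cast
    linarith
  rcases hq.lt_or_eq with hqC | rfl
  · rw [tp_of_ne_zero_of_le hq0 (Nat.lt_succ_iff.mp hqC)]
    linarith
  · rw [tp_of_lt C.lt_succ_self, T_eq_natCast_mul_TSC hC]
    push_cast
    linarith

theorem qm_eq_of_tp_le_of_lt_tp (hmono : Monotone (tp N C Δt m)) {j : ℕ} (hj : j ≤ C)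
    {t : ℝ} (h₁ : tp N C Δt m j ≤ t) (h₂ : t < tp N C Δt m (j + 1)) :
    qm N C Δt m t = j := by
  have hfilter : (Finset.range (C + 1)).filter (fun q => tp N C Δt m q ≤ t)
      = Finset.range (j + 1) := by
    ext q
    simp only [Finset.mem_filter, Finset.mem_range]
    constructor
    · rintro ⟨-, hq⟩
      by_contra! hjq
      exact (h₂.trans_le (hmono hjq)).not_ge hq
    · intro hq
      exact ⟨by omega, (hmono (Nat.lt_succ_iff.mp hq)).trans h₁⟩
  simp [qm, hfilter]

variable {i k : ℕ} {τ t : ℝ}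

theorem qm_sub_qm_sub_eq_of_aligned (hC : C ≠ 0) (he : 0 ≤ (m : ℝ) * Δt / C)
    (heS : (m : ℝ) * Δt / C ≤ TSC N C Δt) (hik : i + k ≤ C) (hτ : k * TSC N C Δt ≤ τ)
    (ht₁ : tp N C Δt m i + τ ≤ t) (ht₂ : t < tp N C Δt m (i + k + 1)) :
    qm N C Δt m t - qm N C Δt m (t - τ) = k := by
  have hmono := tp_monotone hC he heS
  have hshift₁ := tp_le_tp_add_mul hC he heS (Nat.le_add_right i k)
  have hshift₂ := tp_le_tp_add_mul hC he heS (show i + 1 ≤ i + k + 1 by omega)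
  push_cast at hshift₁ hshift₂
  rw [qm_eq_of_tp_le_of_lt_tp hmono hik (by linarith) ht₂,
    qm_eq_of_tp_le_of_lt_tp hmono (j := i) (by omega) (by linarith) (by linarith)]
  push_cast
  ring

theorem qm_sub_qm_sub_eq_of_misaligned (hC : C ≠ 0) (he : 0 ≤ (m : ℝ) * Δt / C)
    (heS : (m : ℝ) * Δt / C ≤ TSC N C Δt) (hik : i + k + 1 ≤ C)
    (hτ : τ < k * TSC N C Δt + min ((m : ℝ) * Δt / C) (TSC N C Δt - m * Δt / C))
    (ht₁ : tp N C Δt m (i + k + 1) ≤ t) (ht₂ : t < tp N C Δt m (i + 1) + τ) :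
    qm N C Δt m t - qm N C Δt m (t - τ) = k + 1 := by
  have hmono := tp_monotone hC he heS
  have hτe := min_le_left ((m : ℝ) * Δt / C) (TSC N C Δt - m * Δt / C)
  have hτS := min_le_right ((m : ℝ) * Δt / C) (TSC N C Δt - m * Δt / C)
  have hi : tp N C Δt m (i + 1) = (i + 1 : ℕ) * TSC N C Δt - m * Δt / C :=
    tp_of_ne_zero_of_le (by omega) (by omega)
  have hik' : tp N C Δt m (i + k + 1) = (i + k + 1 : ℕ) * TSC N C Δt - m * Δt / C :=
    tp_of_ne_zero_of_le (by omega) hik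
  have hlow := natCast_sub_one_mul_le_tp hC he heS (show i + k + 1 + 1 ≤ C + 1 by omega)
  have hup := tp_le_natCast_mul hC he heS (m := m) i
  push_cast at hi hik' hlow
  rw [qm_eq_of_tp_le_of_lt_tp hmono hik ht₁ (by linarith),
    qm_eq_of_tp_le_of_lt_tp hmono (j := i) (by omega) (by linarith) (by linarith)]
  push_cast
  ring

end WrappingPoints

theorem wrapping_index_difference_general
    (N C : ℕ)
    (Δt : ℝ) (m k : ℕ) (hk : k < C) (τ : ℝ)
    (hτ1 : (k : ℝ) * TSC N C Δt ≤ τ)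
    (hτ2 : τ < (k : ℝ) * TSC N C Δt + min (TSC N C Δt - tp N C Δt m 1) (tp N C Δt m 1)) :
    (∀ i : ℕ, i ≤ C - k - 1 → ∀ t : ℝ,
        tp N C Δt m i + τ ≤ t → t < tp N C Δt m (i + k + 1) →
        qm N C Δt m t - qm N C Δt m (t - τ) = (k : ℤ)) ∧
      (∀ i : ℕ, i ≤ C - k - 1 → ∀ t : ℝ,
        tp N C Δt m (i + k + 1) ≤ t → t < tp N C Δt m (i + 1) + τ →
        qm N C Δt m t - qm N C Δt m (t - τ) = (k : ℤ) + 1) ∧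
      (∀ t : ℝ, tp N C Δt m (C - k) + τ ≤ t → t < T N Δt →
        qm N C Δt m t - qm N C Δt m (t - τ) = (k : ℤ)) := by
  have hC : C ≠ 0 := by omega
  rw [tp_one hC, sub_sub_cancel] at hτ2
  obtain ⟨he, heS⟩ := lt_min_iff.mp (show 0 < min ((m : ℝ) * Δt / C) (TSC N C Δt - m * Δt / C)
    by linarith)
  refine ⟨fun i hi t ht₁ ht₂ => ?_, fun i hi t ht₁ ht₂ => ?_, fun t ht₁ ht₂ => ?_⟩
  · exact qm_sub_qm_sub_eq_of_aligned hC he.le (by linarith) (by omega) hτ1 ht₁ ht₂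
  · exact qm_sub_qm_sub_eq_of_misaligned hC he.le (by linarith) (by omega) hτ2 ht₁ ht₂
  · refine qm_sub_qm_sub_eq_of_aligned hC he.le (by linarith) (by omega) hτ1 ht₁ ?_
    rwa [show C - k + k + 1 = C + 1 by omega, tp_of_lt C.lt_succ_self]

/-- Frequency-alignment step lemma: for `τ` in the `k`-th subchirp window, the
wrapping-index difference `q_m(t) − q_m(t−τ)` takes exactly the two values `k` and `k+1`,
on the frequency-aligned and frequency-misaligned sub-intervals respectively. -/
theorem wrapping_index_difference
    (N C : ℕ) (hN : 0 < N) (hNeven : Even N) (hC : 0 < C)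
    (Δt : ℝ) (hΔt : 0 < Δt) (m k : ℕ) (hm : m < N) (hk : k < C) (τ : ℝ)
    (hτ1 : (k : ℝ) * TSC N C Δt ≤ τ)
    (hτ2 : τ < (k : ℝ) * TSC N C Δt + min (TSC N C Δt - tp N C Δt m 1) (tp N C Δt m 1)) :
    (∀ i : ℕ, i ≤ C - k - 1 → ∀ t : ℝ,
        tp N C Δt m i + τ ≤ t → t < tp N C Δt m (i + k + 1) →
        qm N C Δt m t - qm N C Δt m (t - τ) = (k : ℤ)) ∧
      (∀ i : ℕ, i ≤ C - k - 1 → ∀ t : ℝ,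
        tp N C Δt m (i + k + 1) ≤ t → t < tp N C Δt m (i + 1) + τ →
        qm N C Δt m t - qm N C Δt m (t - τ) = (k : ℤ) + 1) ∧
      (∀ t : ℝ, tp N C Δt m (C - k) + τ ≤ t → t < T N Δt →
        qm N C Δt m t - qm N C Δt m (t - τ) = (k : ℤ)) :=
  wrapping_index_difference_general N C Δt m k hk τ hτ1 hτ2

end AFDM
end
end
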